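/- Let (D, ≺_D, ≻_D, σ) be a braided commutative dendriform algebra with σ² = id. Then U_RB(D) := Ш⁰_σ(S⁺(D))/J_RB, with its induced product ⋄, Rota–Baxter operator P and braiding β, together with the map ρ_D : D → U_RB(D) induced by inclusion of D in degree one, is the braided universal enveloping commutative Rota–Baxter algebra of weight 0 of D: ρ_D is a homomorphism of dendriform algebras (for the dendriform structure x ≺_P y = x⋄P(y), x ≻_P y = P(x)⋄y on U_RB(D)), and for any strongly braided commutative Rota–Baxter algebra (R, P_R, τ) of weight 0 and any homomorphism f : D → R of braided dendriform algebras, there exists a unique homomorphism f̄ : U_RB(D) → R of braided Rota–Baxter algebras with f = f̄ ∘ ρ_D. -/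

import Mathlib

/-!
`ρ_D` respects `≺` because the generators of `J_RB` are exactly the defects
`ι(x ≺ y) - ι x ⋄ P(ι y)`. It respects `≻` because `≻ = ≺ ∘ σ`: a strong braiding lets `P`
pass through `τ`, and braided commutativity `μ ∘ τ = μ` then removes `τ`.

A braided dendriform map `f : D → R` extends to `S⁺(D)` and then to a Rota–Baxter
homomorphism `h` on `Ш⁰_σ(S⁺(D))`. Its kernel is a Rota–Baxter ideal containing the generators,
hence contains `J_RB`, so `h` descends along the surjection `π`, and the descended map is again a
homomorphism. Uniqueness: homomorphisms out of `Ш⁰_σ(S⁺(D))` that agree on `D` agree on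
`S⁺(D)`, hence everywhere, by the uniqueness halves of the two freeness properties.
-/

set_option maxHeartbeats 1000000
noncomputable section
open TensorProduct LinearMap

/-- `f ⊗ id` on a triple tensor product. -/
def op12 {k M : Type} [Field k] [AddCommGroup M] [Module k M]
    (f : M ⊗[k] M →ₗ[k] M ⊗[k] M) : (M ⊗[k] M) ⊗[k] M →ₗ[k] (M ⊗[k] M) ⊗[k] M :=
  rTensor M f

/-- `id ⊗ f` on a triple tensor product. -/
def op23 {k M : Type} [Field k] [AddCommGroup M] [Module k M]
    (f : M ⊗[k] M →ₗ[k] M ⊗[k] M) : (M ⊗[k] M) ⊗[k] M →ₗ[k] (M ⊗[k] M) ⊗[k] M :=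
  (TensorProduct.assoc k M M M).symm.toLinearMap ∘ₗ lTensor M f
    ∘ₗ (TensorProduct.assoc k M M M).toLinearMap

/-- `id ⊗ f ⊗ id` on a fourfold tensor product (`f` acting on the middle two factors). -/
def midOp {k M : Type} [Field k] [AddCommGroup M] [Module k M]
    (f : M ⊗[k] M →ₗ[k] M ⊗[k] M) :
    (M ⊗[k] M) ⊗[k] (M ⊗[k] M) →ₗ[k] (M ⊗[k] M) ⊗[k] (M ⊗[k] M) :=
  (TensorProduct.assoc k M M (M ⊗[k] M)).symm.toLinearMap
    ∘ₗ lTensor M (TensorProduct.assoc k M M M).toLinearMap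
    ∘ₗ lTensor M (rTensor M f)
    ∘ₗ lTensor M (TensorProduct.assoc k M M M).symm.toLinearMap
    ∘ₗ (TensorProduct.assoc k M M (M ⊗[k] M)).toLinearMap

/-- a braided commutative (not necessarily unital) algebra. -/
structure BCA (k : Type) [Field k] where
  M : Type
  [acg : AddCommGroup M]
  [mod : Module k M]
  mu : M ⊗[k] M →ₗ[k] M
  tau : M ⊗[k] M →ₗ[k] M ⊗[k] M
  assoc' : mu ∘ₗ LinearMap.rTensor M mu
    = mu ∘ₗ LinearMap.lTensor M mu ∘ₗ (TensorProduct.assoc k M M M).toLinearMap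
  ybe : op12 tau ∘ₗ op23 tau ∘ₗ op12 tau = op23 tau ∘ₗ op12 tau ∘ₗ op23 tau
  braided1 : LinearMap.lTensor M mu ∘ₗ (TensorProduct.assoc k M M M).toLinearMap
      ∘ₗ op12 tau ∘ₗ op23 tau = tau ∘ₗ LinearMap.rTensor M mu
  braided2 : LinearMap.rTensor M mu ∘ₗ op23 tau ∘ₗ op12 tau
    = tau ∘ₗ LinearMap.lTensor M mu ∘ₗ (TensorProduct.assoc k M M M).toLinearMap
  comm : mu ∘ₗ tau = mu

attribute [instance] BCA.acg BCA.mod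

/-- a strongly braided commutative Rota–Baxter algebra of weight 0. -/
structure BCRB (k : Type) [Field k] extends BCA k where
  P : M →ₗ[k] M
  rb : ∀ x y : M, mu (P x ⊗ₜ[k] P y) = P (mu (x ⊗ₜ[k] P y)) + P (mu (P x ⊗ₜ[k] y))
  strongR : tau ∘ₗ LinearMap.rTensor M P = LinearMap.lTensor M P ∘ₗ tau
  strongL : tau ∘ₗ LinearMap.lTensor M P = LinearMap.rTensor M P ∘ₗ tau

/-- homomorphisms of braided algebras. -/
def IsBCAHom {k : Type} [Field k] (A B : BCA k) (f : A.M →ₗ[k] B.M) : Prop :=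
  f ∘ₗ A.mu = B.mu ∘ₗ TensorProduct.map f f
  ∧ B.tau ∘ₗ TensorProduct.map f f = TensorProduct.map f f ∘ₗ A.tau

/-- homomorphisms of braided Rota–Baxter algebras. -/
def IsBCRBHom {k : Type} [Field k] (A B : BCRB k) (f : A.M →ₗ[k] B.M) : Prop :=
  IsBCAHom A.toBCA B.toBCA f ∧ f ∘ₗ A.P = B.P ∘ₗ f

/-- the Rota–Baxter ideal generated by a set. -/
def RBIdeal {k W : Type} [Field k] [AddCommGroup W] [Module k W]
    (mu : W ⊗[k] W →ₗ[k] W) (P : W →ₗ[k] W) (gens : Set W) : Submodule k W :=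
  sInf {J : Submodule k W | gens ⊆ J
    ∧ (∀ x ∈ J, ∀ w : W, mu (x ⊗ₜ[k] w) ∈ J ∧ mu (w ⊗ₜ[k] x) ∈ J)
    ∧ (∀ x ∈ J, P x ∈ J)}

theorem LinearMap.exists_comp_eq_of_ker_le {R M N P : Type*} [Ring R] [AddCommGroup M]
    [Module R M] [AddCommGroup N] [Module R N] [AddCommGroup P] [Module R P]
    {p : M →ₗ[R] N} (hp : Function.Surjective p) {h : M →ₗ[R] P} (hle : ker p ≤ ker h) :
    ∃ g : N →ₗ[R] P, g ∘ₗ p = h :=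
  ⟨(ker p).liftQ h hle ∘ₗ (p.quotKerEquivOfSurjective hp).symm.toLinearMap, by
    ext w
    have hmk : (p.quotKerEquivOfSurjective hp).symm (p w) = Submodule.Quotient.mk w :=
      (LinearEquiv.symm_apply_eq _).2 (quotKerEquivOfSurjective_apply_mk p hp w).symm
    simp only [comp_apply, LinearEquiv.coe_coe, hmk, Submodule.liftQ_apply]⟩

section RBIdeal

variable {k W R : Type} [Field k] [AddCommGroup W] [Module k W] [AddCommGroup R] [Module k R]
  {mu : W ⊗[k] W →ₗ[k] W} {P : W →ₗ[k] W} {gens : Set W}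

theorem subset_RBIdeal : gens ⊆ RBIdeal mu P gens :=
  fun _ hx => Submodule.mem_sInf.2 fun _ hJ => hJ.1 hx

theorem RBIdeal_le_ker {muR : R ⊗[k] R →ₗ[k] R} {PR : R →ₗ[k] R} {h : W →ₗ[k] R}
    (hmu : h ∘ₗ mu = muR ∘ₗ TensorProduct.map h h) (hP : h ∘ₗ P = PR ∘ₗ h)
    (hgens : gens ⊆ ker h) : RBIdeal mu P gens ≤ ker h := by
  refine sInf_le ⟨hgens, fun x hx w => ⟨?_, ?_⟩, fun x hx => ?_⟩ <;>
    simp only [mem_ker] at hx ⊢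
  · rw [← comp_apply h mu, hmu]; simp [hx]
  · rw [← comp_apply h mu, hmu]; simp [hx]
  · rw [← comp_apply h P, hP]; simp [hx]

end RBIdeal

section Hom

variable {k : Type} [Field k]

theorem IsBCAHom.map_mu {A B : BCA k} {f : A.M →ₗ[k] B.M} (hf : IsBCAHom A B f) (a b : A.M) :
    f (A.mu (a ⊗ₜ[k] b)) = B.mu (f a ⊗ₜ[k] f b) := by
  simpa using congr($(hf.1) (a ⊗ₜ[k] b))

theorem IsBCRBHom.map_P {A B : BCRB k} {f : A.M →ₗ[k] B.M} (hf : IsBCRBHom A B f) (a : A.M) :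
    f (A.P a) = B.P (f a) :=
  congr($(hf.2) a)

theorem IsBCAHom.comp {A B C : BCA k} {g : B.M →ₗ[k] C.M} {f : A.M →ₗ[k] B.M}
    (hg : IsBCAHom B C g) (hf : IsBCAHom A B f) : IsBCAHom A C (g ∘ₗ f) := by
  constructor
  · rw [TensorProduct.map_comp, comp_assoc, hf.1, ← comp_assoc, hg.1, comp_assoc]
  · rw [TensorProduct.map_comp, ← comp_assoc, hg.2, comp_assoc, hf.2, comp_assoc]

theorem IsBCRBHom.comp {A B C : BCRB k} {g : B.M →ₗ[k] C.M} {f : A.M →ₗ[k] B.M}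
    (hg : IsBCRBHom B C g) (hf : IsBCRBHom A B f) : IsBCRBHom A C (g ∘ₗ f) :=
  ⟨hg.1.comp hf.1, by rw [comp_assoc, hf.2, ← comp_assoc, hg.2, comp_assoc]⟩

theorem IsBCAHom.of_comp_of_surjective {A B C : BCA k} {p : A.M →ₗ[k] B.M}
    {g : B.M →ₗ[k] C.M} (hp : IsBCAHom A B p) (hsurj : Function.Surjective p)
    (hgp : IsBCAHom A C (g ∘ₗ p)) : IsBCAHom B C g := by
  have hsurj₂ := TensorProduct.map_surjective hsurj hsurj
  constructor
  · rw [← cancel_right hsurj₂, comp_assoc, ← hp.1, ← comp_assoc, hgp.1, comp_assoc,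
      TensorProduct.map_comp]
  · rw [← cancel_right hsurj₂, comp_assoc, ← TensorProduct.map_comp, hgp.2, comp_assoc,
      hp.2, ← comp_assoc, TensorProduct.map_comp]

theorem IsBCRBHom.of_comp_of_surjective {A B C : BCRB k} {p : A.M →ₗ[k] B.M}
    {g : B.M →ₗ[k] C.M} (hp : IsBCRBHom A B p) (hsurj : Function.Surjective p)
    (hgp : IsBCRBHom A C (g ∘ₗ p)) : IsBCRBHom B C g :=
  ⟨hp.1.of_comp_of_surjective hsurj hgp.1, by
    rw [← cancel_right hsurj, comp_assoc, ← hp.2, ← comp_assoc, hgp.2, comp_assoc]⟩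

variable {D : Type} [AddCommGroup D] [Module k D] {σ : D ⊗[k] D →ₗ[k] D ⊗[k] D}

theorem IsBCAHom.comp_braided {A B : BCA k} {f : A.M →ₗ[k] B.M} {i : D →ₗ[k] A.M}
    (hf : IsBCAHom A B f) (hi : A.tau ∘ₗ TensorProduct.map i i = TensorProduct.map i i ∘ₗ σ) :
    B.tau ∘ₗ TensorProduct.map (f ∘ₗ i) (f ∘ₗ i) = TensorProduct.map (f ∘ₗ i) (f ∘ₗ i) ∘ₗ σ := by
  rw [TensorProduct.map_comp, ← comp_assoc, hf.2, comp_assoc, hi, comp_assoc]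

end Hom

theorem BCRB.map_succ_of_map_prec {k D : Type} [Field k] [AddCommGroup D] [Module k D]
    {R : BCRB k} {prec succ : D ⊗[k] D →ₗ[k] D} {σ : D ⊗[k] D →ₗ[k] D ⊗[k] D}
    {f : D →ₗ[k] R.M} (hcomm : prec ∘ₗ σ = succ)
    (hf : R.tau ∘ₗ TensorProduct.map f f = TensorProduct.map f f ∘ₗ σ)
    (hprec : ∀ x y : D, f (prec (x ⊗ₜ[k] y)) = R.mu (f x ⊗ₜ[k] R.P (f y))) (x y : D) :
    f (succ (x ⊗ₜ[k] y)) = R.mu (R.P (f x) ⊗ₜ[k] f y) := by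
  have hprec' : f ∘ₗ prec = R.mu ∘ₗ lTensor R.M R.P ∘ₗ TensorProduct.map f f :=
    TensorProduct.ext' fun x y => by simp [hprec]
  calc f (succ (x ⊗ₜ[k] y))
      = R.mu (lTensor R.M R.P (TensorProduct.map f f (σ (x ⊗ₜ[k] y)))) := by
        rw [← hcomm]; exact congr($hprec' (σ (x ⊗ₜ[k] y)))
    _ = R.mu (lTensor R.M R.P (R.tau (f x ⊗ₜ[k] f y))) := by
        rw [← comp_apply (TensorProduct.map f f), ← hf]; rfl
    _ = R.mu (R.tau (R.P (f x) ⊗ₜ[k] f y)) := by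
        simpa using congr(R.mu ($(R.strongR) (f x ⊗ₜ[k] f y))).symm
    _ = R.mu (R.P (f x) ⊗ₜ[k] f y) := congr($(R.comm) _)

section Free

variable {k D : Type} [Field k] [AddCommGroup D] [Module k D]

def IsFreeBCAOn (σ : D ⊗[k] D →ₗ[k] D ⊗[k] D) (A : BCA k) (i : D →ₗ[k] A.M) : Prop :=
  ∀ (B : BCA k) (f : D →ₗ[k] B.M),
    B.tau ∘ₗ TensorProduct.map f f = TensorProduct.map f f ∘ₗ σ →
    ∃! g : A.M →ₗ[k] B.M, IsBCAHom A B g ∧ g ∘ₗ i = f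

def IsFreeBCRBOn (A : BCA k) (W : BCRB k) (j : A.M →ₗ[k] W.M) : Prop :=
  ∀ (R : BCRB k) (φ : A.M →ₗ[k] R.M), IsBCAHom A R.toBCA φ →
    ∃! h : W.M →ₗ[k] R.M, IsBCRBHom W R h ∧ h ∘ₗ j = φ

variable {σ : D ⊗[k] D →ₗ[k] D ⊗[k] D} {A : BCA k} {i : D →ₗ[k] A.M} {W : BCRB k}
  {j : A.M →ₗ[k] W.M} {R : BCRB k}

theorem IsFreeBCRBOn.exists_lift (hW : IsFreeBCRBOn A W j) (hA : IsFreeBCAOn σ A i)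
    {f : D →ₗ[k] R.M} (hf : R.tau ∘ₗ TensorProduct.map f f = TensorProduct.map f f ∘ₗ σ) :
    ∃ h : W.M →ₗ[k] R.M, IsBCRBHom W R h ∧ h ∘ₗ j ∘ₗ i = f := by
  obtain ⟨φ, ⟨hφ, hφi⟩, -⟩ := hA R.toBCA f hf
  obtain ⟨h, ⟨hh, hhj⟩, -⟩ := hW R φ hφ
  exact ⟨h, hh, by rw [← comp_assoc, hhj, hφi]⟩

theorem IsFreeBCRBOn.hom_ext (hW : IsFreeBCRBOn A W j) (hA : IsFreeBCAOn σ A i)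
    (hi : A.tau ∘ₗ TensorProduct.map i i = TensorProduct.map i i ∘ₗ σ)
    (hj : IsBCAHom A W.toBCA j) {h₁ h₂ : W.M →ₗ[k] R.M} (hh₁ : IsBCRBHom W R h₁)
    (hh₂ : IsBCRBHom W R h₂) (heq : h₁ ∘ₗ j ∘ₗ i = h₂ ∘ₗ j ∘ₗ i) : h₁ = h₂ := by
  have hj₁ := hh₁.1.comp hj
  have hφ : h₁ ∘ₗ j = h₂ ∘ₗ j :=
    (hA R.toBCA _ (hj₁.comp_braided hi)).unique ⟨hj₁, rfl⟩ ⟨hh₂.1.comp hj, heq.symm⟩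
  exact (hW R _ hj₁).unique ⟨hh₁, rfl⟩ ⟨hh₂, hφ.symm⟩

end Free

theorem universal_enveloping_braided_RB_of_dendriform_general
    {k D : Type} [Field k] [AddCommGroup D] [Module k D]
    (pD sD : D ⊗[k] D →ₗ[k] D)
    (sgD : D ⊗[k] D →ₗ[k] D ⊗[k] D)
    (hcommD1 : pD ∘ₗ sgD = sD)
    -- `A = S⁺(D)` : the free braided commutative algebra on the braided vector space `D` :
    (A : BCA k) (iDA : D →ₗ[k] A.M)
    (hiDA : A.tau ∘ₗ TensorProduct.map iDA iDA = TensorProduct.map iDA iDA ∘ₗ sgD)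
    (hAfree : ∀ (B : BCA k) (f : D →ₗ[k] B.M),
      B.tau ∘ₗ TensorProduct.map f f = TensorProduct.map f f ∘ₗ sgD →
      ∃! g : A.M →ₗ[k] B.M, IsBCAHom A B g ∧ g ∘ₗ iDA = f)
    -- `W = Ш⁰_σ(S⁺(D))` : the free strongly braided commutative Rota–Baxter algebra
    -- of weight 0 on `A` :
    (W : BCRB k) (jAW : A.M →ₗ[k] W.M)
    (hjAW : IsBCAHom A W.toBCA jAW)
    (hWfree : ∀ (R : BCRB k) (φ : A.M →ₗ[k] R.M), IsBCAHom A R.toBCA φ →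
      ∃! h : W.M →ₗ[k] R.M, IsBCRBHom W R h ∧ h ∘ₗ jAW = φ) :
    -- `ι : D → W`, the generators and the ideal `J_RB` :
    let iota : D →ₗ[k] W.M := jAW ∘ₗ iDA
    let J : Submodule k W.M := RBIdeal W.mu W.P
      (Set.range (fun xy : D × D =>
        iota (pD (xy.1 ⊗ₜ[k] xy.2)) - W.mu (iota xy.1 ⊗ₜ[k] W.P (iota xy.2))))
    -- `U = W / J_RB`, with its induced structure :
    ∀ (U : BCRB k) (proj : W.M →ₗ[k] U.M),
      Function.Surjective proj → LinearMap.ker proj = J → IsBCRBHom W U proj →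
      let rho : D →ₗ[k] U.M := proj ∘ₗ iota
      -- `ρ_D` is a homomorphism of dendriform algebras :
      ((∀ x y : D, rho (pD (x ⊗ₜ[k] y)) = U.mu (rho x ⊗ₜ[k] U.P (rho y)))
        ∧ (∀ x y : D, rho (sD (x ⊗ₜ[k] y)) = U.mu (U.P (rho x) ⊗ₜ[k] rho y)))
      -- universal property :
      ∧ ∀ (R : BCRB k) (f : D →ₗ[k] R.M),
          ((∀ x y : D, f (pD (x ⊗ₜ[k] y)) = R.mu (f x ⊗ₜ[k] R.P (f y)))
            ∧ (∀ x y : D, f (sD (x ⊗ₜ[k] y)) = R.mu (R.P (f x) ⊗ₜ[k] f y))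
            ∧ R.tau ∘ₗ TensorProduct.map f f = TensorProduct.map f f ∘ₗ sgD) →
          ∃! g : U.M →ₗ[k] R.M, IsBCRBHom U R g ∧ g ∘ₗ rho = f := by
  intro iota J U proj hsurj hker hproj rho
  have hρ_prec (x y : D) : rho (pD (x ⊗ₜ[k] y)) = U.mu (rho x ⊗ₜ[k] U.P (rho y)) := by
    have hgen : iota (pD (x ⊗ₜ[k] y)) - W.mu (iota x ⊗ₜ[k] W.P (iota y)) ∈ ker proj :=
      hker ▸ subset_RBIdeal (Set.mem_range_self (x, y))
    rwa [sub_mem_ker_iff, hproj.1.map_mu, hproj.map_P] at hgen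
  have hρ_succ := BCRB.map_succ_of_map_prec hcommD1 ((hproj.1.comp hjAW).comp_braided hiDA) hρ_prec
  refine ⟨⟨hρ_prec, hρ_succ⟩, ?_⟩
  rintro R f ⟨hf_prec, -, hf_braided⟩
  obtain ⟨h, hh, hhf⟩ := IsFreeBCRBOn.exists_lift hWfree hAfree hf_braided
  have hJ : ker proj ≤ ker h := by
    refine hker ▸ RBIdeal_le_ker hh.1.1 hh.2 ?_
    rintro _ ⟨⟨x, y⟩, rfl⟩
    simp only [SetLike.mem_coe, sub_mem_ker_iff, hh.1.map_mu, hh.map_P]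
    simp only [iota, ← comp_apply h, hhf, hf_prec]
  obtain ⟨g, rfl⟩ := exists_comp_eq_of_ker_le hsurj hJ
  refine ⟨g, ⟨hproj.of_comp_of_surjective hsurj hh, hhf⟩, fun g' ⟨hg', hg'f⟩ => ?_⟩
  exact (cancel_right hsurj).1 <| IsFreeBCRBOn.hom_ext hWfree hAfree hiDA hjAW
    (hg'.comp hproj) hh (hg'f.trans hhf.symm)

/-- Let `(D, ≺_D, ≻_D, σ)` be a braided commutative dendriform algebra with
`σ² = id`.  Let `A` be the (positive) quantum symmetric algebra `S⁺(D)` — i.e. the free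
braided commutative algebra on the braided vector space `D` —, let `W` be the free strongly
braided commutative Rota–Baxter algebra of weight 0 on `A` (i.e. `Ш⁰_σ(S⁺(D))`),
let `J_RB ⊆ W` be the Rota–Baxter ideal generated by `x ≺_D y − x ⋄ P(y)` for `x, y ∈ D`, and
let `U = W/J_RB` (presented by a surjective braided Rota–Baxter homomorphism `π` with kernel
`J_RB`).  Then `ρ_D := π ∘ ι : D → U` is a homomorphism of dendriform algebras for the
dendriform structure `x ≺_P y = x ⋄ P(y)`, `x ≻_P y = P(x) ⋄ y` on `U`, and `(U, ρ_D)` is the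
braided universal enveloping commutative Rota–Baxter algebra of weight 0 of `D`: every
homomorphism `f : D → R` of braided dendriform algebras into a strongly braided commutative
Rota–Baxter algebra `R` of weight 0 factors uniquely through `ρ_D` via a homomorphism of
braided Rota–Baxter algebras. -/
theorem universal_enveloping_braided_RB_of_dendriform
    {k D : Type} [Field k] [AddCommGroup D] [Module k D]
    (pD sD : D ⊗[k] D →ₗ[k] D)
    (sgD : D ⊗[k] D →ₗ[k] D ⊗[k] D)
    (hybeD : op12 sgD ∘ₗ op23 sgD ∘ₗ op12 sgD = op23 sgD ∘ₗ op12 sgD ∘ₗ op23 sgD)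
    (hsymD : sgD ∘ₗ sgD = LinearMap.id)
    (hd1 : ∀ x y z : D, pD (pD (x ⊗ₜ[k] y) ⊗ₜ[k] z)
      = pD (x ⊗ₜ[k] (pD (y ⊗ₜ[k] z) + sD (y ⊗ₜ[k] z))))
    (hd2 : ∀ x y z : D, pD (sD (x ⊗ₜ[k] y) ⊗ₜ[k] z) = sD (x ⊗ₜ[k] pD (y ⊗ₜ[k] z)))
    (hd3 : ∀ x y z : D, sD (x ⊗ₜ[k] sD (y ⊗ₜ[k] z))
      = sD ((pD (x ⊗ₜ[k] y) + sD (x ⊗ₜ[k] y)) ⊗ₜ[k] z))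
    (hc1 : sgD ∘ₗ lTensor D pD ∘ₗ (TensorProduct.assoc k D D D).toLinearMap
        = rTensor D pD ∘ₗ op23 sgD ∘ₗ op12 sgD)
    (hc2 : sgD ∘ₗ rTensor D pD
        = lTensor D pD ∘ₗ (TensorProduct.assoc k D D D).toLinearMap ∘ₗ op12 sgD ∘ₗ op23 sgD)
    (hc3 : sgD ∘ₗ lTensor D sD ∘ₗ (TensorProduct.assoc k D D D).toLinearMap
        = rTensor D sD ∘ₗ op23 sgD ∘ₗ op12 sgD)
    (hc4 : sgD ∘ₗ rTensor D sD
        = lTensor D sD ∘ₗ (TensorProduct.assoc k D D D).toLinearMap ∘ₗ op12 sgD ∘ₗ op23 sgD)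
    (hcommD1 : pD ∘ₗ sgD = sD) (hcommD2 : sD ∘ₗ sgD = pD)
    -- `A = S⁺(D)` : the free braided commutative algebra on the braided vector space `D` :
    (A : BCA k) (iDA : D →ₗ[k] A.M)
    (hiDA : A.tau ∘ₗ TensorProduct.map iDA iDA = TensorProduct.map iDA iDA ∘ₗ sgD)
    (hAfree : ∀ (B : BCA k) (f : D →ₗ[k] B.M),
      B.tau ∘ₗ TensorProduct.map f f = TensorProduct.map f f ∘ₗ sgD →
      ∃! g : A.M →ₗ[k] B.M, IsBCAHom A B g ∧ g ∘ₗ iDA = f)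
    -- `W = Ш⁰_σ(S⁺(D))` : the free strongly braided commutative Rota–Baxter algebra
    -- of weight 0 on `A` :
    (W : BCRB k) (jAW : A.M →ₗ[k] W.M)
    (hjAW : IsBCAHom A W.toBCA jAW)
    (hWfree : ∀ (R : BCRB k) (φ : A.M →ₗ[k] R.M), IsBCAHom A R.toBCA φ →
      ∃! h : W.M →ₗ[k] R.M, IsBCRBHom W R h ∧ h ∘ₗ jAW = φ) :
    -- `ι : D → W`, the generators and the ideal `J_RB` :
    let iota : D →ₗ[k] W.M := jAW ∘ₗ iDA
    let J : Submodule k W.M := RBIdeal W.mu W.P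
      (Set.range (fun xy : D × D =>
        iota (pD (xy.1 ⊗ₜ[k] xy.2)) - W.mu (iota xy.1 ⊗ₜ[k] W.P (iota xy.2))))
    -- `U = W / J_RB`, with its induced structure :
    ∀ (U : BCRB k) (proj : W.M →ₗ[k] U.M),
      Function.Surjective proj → LinearMap.ker proj = J → IsBCRBHom W U proj →
      let rho : D →ₗ[k] U.M := proj ∘ₗ iota
      -- `ρ_D` is a homomorphism of dendriform algebras :
      ((∀ x y : D, rho (pD (x ⊗ₜ[k] y)) = U.mu (rho x ⊗ₜ[k] U.P (rho y)))
        ∧ (∀ x y : D, rho (sD (x ⊗ₜ[k] y)) = U.mu (U.P (rho x) ⊗ₜ[k] rho y)))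
      -- universal property :
      ∧ ∀ (R : BCRB k) (f : D →ₗ[k] R.M),
          ((∀ x y : D, f (pD (x ⊗ₜ[k] y)) = R.mu (f x ⊗ₜ[k] R.P (f y)))
            ∧ (∀ x y : D, f (sD (x ⊗ₜ[k] y)) = R.mu (R.P (f x) ⊗ₜ[k] f y))
            ∧ R.tau ∘ₗ TensorProduct.map f f = TensorProduct.map f f ∘ₗ sgD) →
          ∃! g : U.M →ₗ[k] R.M, IsBCRBHom U R g ∧ g ∘ₗ rho = f :=
  universal_enveloping_braided_RB_of_dendriform_general pD sD sgD hcommD1 A iDA hiDA hAfree W jAW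
    hjAW hWfree
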